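/- arXiv:1501.00217 — 4 statements merged into one kernel-verified Lean document; each statement's English description precedes it below -/
import Mathlib

section
/- If ν is a quasistationary distribution of a Markov chain in a set S, then starting from ν, the first exit time τ from S and the exit position X_τ are independent random variables. -/
open MeasureTheory ProbabilityTheory Filter
open scoped Classical

noncomputable section

namespace ParRep

variable {E : Type*} [MeasurableSpace E]

/-- The σ-algebra generated by `X 0, ..., X n`. -/
def past {Ω : Type*} [MeasurableSpace Ω] (X : ℕ → Ω → E) (n : ℕ) : MeasurableSpace Ω :=
  ⨆ i ∈ Finset.range (n + 1), MeasurableSpace.comap (X i) inferInstance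

/-- `X` is a time-homogeneous Markov chain with transition kernel `κ` under `P`:
each `X n` is measurable, `κ` is a Markov kernel, and the conditional law of
`X (n+1)` given the past is `κ (X n)`. -/
def IsMarkov {Ω : Type*} [MeasurableSpace Ω] (P : Measure Ω)
    (X : ℕ → Ω → E) (κ : Kernel E E) : Prop :=
  (∀ n, Measurable (X n)) ∧ IsMarkovKernel κ ∧
  ∀ (n : ℕ) (A : Set E), MeasurableSet A →
    (fun ω => ((κ (X n ω)) A).toReal)
      =ᵐ[P] P[(X (n + 1) ⁻¹' A).indicator (fun _ => (1 : ℝ)) | past X n]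

/-- The first exit time of the chain `X` from the set `S`. -/
def exitTime {Ω : Type*} (X : ℕ → Ω → E) (S : Set E) (ω : Ω) : ℕ :=
  sInf {n | X n ω ∉ S}

/-- The event of surviving in `S` during times `1, ..., n`. -/
def surv {Ω : Type*} (X : ℕ → Ω → E) (S : Set E) (n : ℕ) : Set Ω :=
  ⋂ i ∈ Finset.Icc 1 n, X i ⁻¹' S

/-- `ν` is a quasistationary distribution for the chain `X` in `S` under `P`. -/
def IsQSD {Ω : Type*} [MeasurableSpace Ω] (P : Measure Ω)
    (X : ℕ → Ω → E) (S : Set E) (ν : Measure E) : Prop :=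
  ∀ n, 1 ≤ n → ∀ A : Set E, A ⊆ S → MeasurableSet A →
    P (X n ⁻¹' A ∩ surv X S n) = ν A * P (surv X S n)

/-- `ν` is a QSD for the kernel `κ` in `S`: every chain with kernel `κ` started
from `ν` satisfies the QSD identity. -/
def IsQSDFor (κ : Kernel E E) (S : Set E) (ν : Measure E) : Prop :=
  ∀ (Ω : Type) (_ : MeasurableSpace Ω) (P : Measure Ω) (X : ℕ → Ω → E),
    IsProbabilityMeasure P → IsMarkov P X κ → P.map (X 0) = ν → IsQSD P X S ν

/-- The `n`-step distribution of the chain with kernel `κ` and initial law `μ0`. -/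
def iterMeasure {α : Type*} [MeasurableSpace α] (κ : Kernel α α) (μ0 : Measure α) :
    ℕ → Measure α
  | 0 => μ0
  | n + 1 => (iterMeasure κ μ0 n).bind (fun a => κ a)

/-- The Doeblin-type minorization condition on `S`. -/
def Doeblin (κ : Kernel E E) (S : Set E) (α : ℝ) (lam : Measure E) : Prop :=
  IsProbabilityMeasure lam ∧ lam Sᶜ = 0 ∧
  ∀ x ∈ S, ∀ C : Set E, MeasurableSet C → C ⊆ S →
    ENNReal.ofReal α * lam C ≤ (κ x) C

/-- Uniform ergodicity of the kernel `κ` with limiting measure `μ`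
(total variation expressed as a supremum over measurable sets). -/
def UnifErgodic (κ : Kernel E E) (μ : Measure E) : Prop :=
  IsProbabilityMeasure μ ∧
  ∀ ε : ℝ, 0 < ε → ∃ N : ℕ, ∀ n ≥ N, ∀ ξ : Measure E, IsProbabilityMeasure ξ →
    ∀ A : Set E, MeasurableSet A →
      |(iterMeasure κ ξ n A).toReal - (μ A).toReal| ≤ ε

/-- `κY` is the transition kernel of the extended (ParRep) chain on `E × ℕ`
built from `κ`, the collection `𝒮` of metastable sets, the QSDs `νF`, and the
decorrelation time `Tc` (the counter is capped at `Tc`). -/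
def IsExtKernel (κ : Kernel E E) (𝒮 : Set (Set E)) (νF : Set E → Measure E)
    (Tc : ℕ) (κY : Kernel (E × ℕ) (E × ℕ)) : Prop :=
  (∀ y : E, (∀ S ∈ 𝒮, y ∉ S) → ∀ t : ℕ,
      κY (y, t) = ((κ y).map (fun y' => (y', 0)) : Measure (E × ℕ))) ∧
  (∀ S ∈ 𝒮, ∀ y ∈ S,
    (∀ t : ℕ, t + 1 < Tc →
      κY (y, t) = ((κ y).map (fun y' => (y', if y' ∈ S then t + 1 else 0)) : Measure (E × ℕ))) ∧
    κY (y, Tc - 1) =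
      (((νF S).bind (fun z => κ z)).map (fun y' => (y', if y' ∈ S then Tc else 0)) : Measure (E × ℕ)) ∧
    κY (y, Tc) = ((κ y).map (fun y' => (y', if y' ∈ S then Tc else 0)) : Measure (E × ℕ)))

/-- Harris chain data `(ε, A, B, ρ)` for the kernel `κ`. -/
def IsHarris {σ : Type*} [MeasurableSpace σ] (κ : Kernel σ σ)
    (ε : ℝ) (A B : Set σ) (ρ : Measure σ) : Prop :=
  0 < ε ∧ IsProbabilityMeasure ρ ∧ ρ Bᶜ = 0 ∧
  (∀ x : σ, ∃ n : ℕ, 0 < iterMeasure κ (Measure.dirac x) n A) ∧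
  (∀ x ∈ A, ∀ C : Set σ, MeasurableSet C → C ⊆ B →
    ENNReal.ofReal ε * ρ C ≤ (κ x) C)

/-- `κbar` is the auxiliary (split-chain) kernel on `Option σ` associated with the
Harris chain data `(ε, A, ρ)`; `none` is the regeneration atom. -/
def IsAuxKernel {σ : Type*} [MeasurableSpace σ] (κ : Kernel σ σ)
    (A : Set σ) (ε : ℝ) (ρ : Measure σ)
    (κbar : Kernel (σ ⊕ Unit) (σ ⊕ Unit)) : Prop :=
  (∀ x ∉ A, κbar (Sum.inl x) = ((κ x).map Sum.inl : Measure (σ ⊕ Unit))) ∧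
  (∀ x ∈ A, κbar (Sum.inl x)
      = (((κ x) - (ENNReal.ofReal ε) • ρ).map Sum.inl : Measure (σ ⊕ Unit))
        + (ENNReal.ofReal ε) • Measure.dirac (Sum.inr () : σ ⊕ Unit)) ∧
  (κbar (Sum.inr ()) : Measure (σ ⊕ Unit)) = ρ.bind (fun x => κbar (Sum.inl x))

end ParRep

/-!
Started from a quasistationary distribution, survival up to time `n` is independent of the
position at time `n + 1`: on survival `X n` is still distributed as `ν`, so the Markov property
gives `P(surv n ∩ {X (n+1) ∈ A}) = P(surv n) · P(X 1 ∈ A)`. Hence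
`P(τ = k + 1, X_τ ∈ A) = P(X 1 ∈ S)^k · P(X 1 ∈ A \ S)` is of product form in `(k, A)`, and a
joint law of product form is the product of its marginals. The event `τ = 0` is null: it means
`X 0 ∉ S` or never leaving `S`, which has probability at most `P(X 1 ∈ S)^n → 0`.
-/

open Set
open scoped ENNReal

namespace ProbabilityTheory

variable {Ω E : Type*} [MeasurableSpace Ω] [MeasurableSpace E]

lemma measure_eq_tsum_inter_fiber {μ : Measure Ω} {T : Ω → ℕ} (hT : Measurable T) {t : Set Ω}
    (ht : MeasurableSet t) : μ t = ∑' k, μ ({ω | T ω = k} ∩ t) := by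
  have ht_eq : t = ⋃ k, {ω | T ω = k} ∩ t := by
    ext ω; simp
  conv_lhs => rw [ht_eq]
  refine measure_iUnion (fun i j hij => ?_) fun k => (hT (measurableSet_singleton k)).inter ht
  exact Disjoint.mono inter_subset_left inter_subset_left
    (disjoint_left.2 fun ω hi hj => hij (hi.symm.trans hj))

theorem measure_inter_eq_mul_of_factorization {μ : Measure Ω} [IsProbabilityMeasure μ]
    {T : Ω → ℕ} {Y : Ω → E} (hT : Measurable T) (hY : Measurable Y)
    (a : ℕ → ℝ≥0∞) (b : Set E → ℝ≥0∞)
    (hab : ∀ k A, MeasurableSet A → μ ({ω | T ω = k} ∩ {ω | Y ω ∈ A}) = a k * b A)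
    (k : ℕ) {A : Set E} (hA : MeasurableSet A) :
    μ ({ω | T ω = k} ∩ {ω | Y ω ∈ A}) = μ {ω | T ω = k} * μ {ω | Y ω ∈ A} := by
  have hY_eq : ∀ A, MeasurableSet A → μ {ω | Y ω ∈ A} = (∑' k, a k) * b A := fun A hA => by
    rw [measure_eq_tsum_inter_fiber (t := {ω | Y ω ∈ A}) hT (hY hA), ← ENNReal.tsum_mul_right]
    exact tsum_congr fun k => hab k A hA
  have hnorm : (∑' k, a k) * b univ = 1 := by
    simpa using (hY_eq univ .univ).symm
  have hT_eq : μ {ω | T ω = k} = a k * b univ := by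
    simpa using hab k univ .univ
  calc μ ({ω | T ω = k} ∩ {ω | Y ω ∈ A}) = a k * b A * ((∑' k, a k) * b univ) := by
        rw [hab k A hA, hnorm, mul_one]
    _ = μ {ω | T ω = k} * μ {ω | Y ω ∈ A} := by
        rw [hT_eq, hY_eq A hA]; ring

end ProbabilityTheory

namespace ParRep

variable {E Ω : Type*} {X : ℕ → Ω → E} {S : Set E}

@[simp]
lemma surv_zero : surv X S 0 = univ := by
  simp [surv]

lemma surv_succ (n : ℕ) : surv X S (n + 1) = surv X S n ∩ X (n + 1) ⁻¹' S := by
  have hIcc : Finset.Icc 1 (n + 1) = insert (n + 1) (Finset.Icc 1 n) :=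
    (Finset.insert_Icc_right_eq_Icc_succ n.succ_pos).symm
  rw [surv, surv, hIcc, Finset.set_biInter_insert, inter_comm]

lemma exitTime_eq_zero_iff {ω : Ω} :
    exitTime X S ω = 0 ↔ X 0 ω ∉ S ∨ ∀ n, X n ω ∈ S := by
  simp [exitTime, Nat.sInf_eq_zero, eq_empty_iff_forall_notMem]

lemma exitTime_eq_succ_iff {ω : Ω} {k : ℕ} :
    exitTime X S ω = k + 1 ↔ X (k + 1) ω ∉ S ∧ ∀ i ≤ k, X i ω ∈ S := by
  unfold exitTime
  constructor
  · intro h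
    exact ⟨h ▸ Nat.sInf_mem (Nat.nonempty_of_sInf_eq_succ h),
      fun i hi => not_not.1 (Nat.notMem_of_lt_sInf (s := {n | X n ω ∉ S}) (by omega))⟩
  · rintro ⟨hk, hle⟩
    exact le_antisymm (Nat.sInf_le hk)
      (not_lt.1 fun hlt => Nat.sInf_mem (s := {n | X n ω ∉ S}) ⟨_, hk⟩ (hle _ (by omega)))

lemma exitTime_eq_succ_inter_exitPos (k : ℕ) (A : Set E) :
    {ω | exitTime X S ω = k + 1} ∩ {ω | X (exitTime X S ω) ω ∈ A}
      = X 0 ⁻¹' S ∩ (surv X S k ∩ X (k + 1) ⁻¹' (A ∩ Sᶜ)) := by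
  ext ω
  simp only [surv, mem_inter_iff, mem_ofPred_eq, mem_iInter₂, mem_preimage, Finset.mem_Icc,
    mem_compl_iff]
  constructor
  · rintro ⟨hT, hA⟩
    obtain ⟨hk, hle⟩ := exitTime_eq_succ_iff.1 hT
    exact ⟨hle 0 k.zero_le, fun i hi => hle i hi.2, hT ▸ hA, hk⟩
  · rintro ⟨h0, hsurv, hA, hk⟩
    have hT : exitTime X S ω = k + 1 := by
      refine exitTime_eq_succ_iff.2 ⟨hk, fun i hi => ?_⟩
      rcases i with _ | i
      exacts [h0, hsurv _ ⟨i.succ_pos, hi⟩]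
    exact ⟨hT, hT ▸ hA⟩

variable [MeasurableSpace E] [MeasurableSpace Ω]

lemma past_le (hX : ∀ n, Measurable (X n)) (n : ℕ) : past X n ≤ ‹MeasurableSpace Ω› :=
  iSup₂_le fun i _ => (hX i).comap_le

lemma measurableSet_past_preimage {i n : ℕ} (hin : i ≤ n) {A : Set E} (hA : MeasurableSet A) :
    MeasurableSet[past X n] (X i ⁻¹' A) :=
  le_iSup₂ (f := fun j (_ : j ∈ Finset.range (n + 1)) => MeasurableSpace.comap (X j) inferInstance)
    i (by simp only [Finset.mem_range]; omega) _ ⟨A, hA, rfl⟩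

lemma measurableSet_past_surv (hS : MeasurableSet S) (n : ℕ) :
    MeasurableSet[past X n] (surv X S n) :=
  .iInter fun _ => .iInter fun hi => measurableSet_past_preimage (Finset.mem_Icc.1 hi).2 hS

lemma measurable_exitTime (hX : ∀ n, Measurable (X n)) (hS : MeasurableSet S) :
    Measurable (exitTime X S) := by
  refine measurable_to_countable' fun k => ?_
  rcases k with _ | k
  · have : exitTime X S ⁻¹' {0} = (X 0 ⁻¹' S)ᶜ ∪ ⋂ n, X n ⁻¹' S := by
      ext ω; simp [exitTime_eq_zero_iff]
    rw [this]
    exact (hX 0 hS).compl.union (.iInter fun n => hX n hS)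
  · have : exitTime X S ⁻¹' {k + 1} = (X (k + 1) ⁻¹' S)ᶜ ∩ ⋂ i ≤ k, X i ⁻¹' S := by
      ext ω; simp [exitTime_eq_succ_iff]
    rw [this]
    exact (hX _ hS).compl.inter (.iInter fun i => .iInter fun _ => hX i hS)

lemma measurable_exitPos (hX : ∀ n, Measurable (X n)) (hS : MeasurableSet S) :
    Measurable fun ω => X (exitTime X S ω) ω :=
  (measurable_from_prod_countable_right (f := fun p : ℕ × Ω => X p.1 p.2) hX).comp
    ((measurable_exitTime hX hS).prodMk measurable_id)

lemma IsMarkov.measure_inter_preimage_succ {P : Measure Ω} [IsFiniteMeasure P]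
    {κ : Kernel E E} (hM : IsMarkov P X κ) {n : ℕ} {B : Set Ω} (hB : MeasurableSet[past X n] B)
    {A : Set E} (hA : MeasurableSet A) :
    P (B ∩ X (n + 1) ⁻¹' A) = ∫⁻ ω in B, κ (X n ω) A ∂P := by
  obtain ⟨hX, hκ, hcond⟩ := hM
  have hint : Integrable (fun ω => (κ (X n ω) A).toReal) P :=
    integrable_condExp.congr (hcond n A hA).symm
  calc P (B ∩ X (n + 1) ⁻¹' A)
      = ENNReal.ofReal (∫ ω in B, (X (n + 1) ⁻¹' A).indicator (fun _ => (1 : ℝ)) ω ∂P) := by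
        rw [← Pi.one_def, integral_indicator_one (hX _ hA), measureReal_restrict_apply (hX _ hA),
          inter_comm, ofReal_measureReal]
    _ = ENNReal.ofReal (∫ ω in B, (κ (X n ω) A).toReal ∂P) := by
        rw [← setIntegral_condExp (past_le hX n) ((integrable_const 1).indicator (hX _ hA)) hB,
          setIntegral_congr_ae (past_le hX n _ hB) ((hcond n A hA).mono fun _ h _ => h.symm)]
    _ = ∫⁻ ω in B, κ (X n ω) A ∂P := by
        rw [ofReal_integral_eq_lintegral_ofReal hint.integrableOn
          (ae_of_all _ fun _ => ENNReal.toReal_nonneg)]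
        simp_rw [ENNReal.ofReal_toReal (measure_ne_top _ _)]

section QSD

variable {P : Measure Ω} [IsProbabilityMeasure P] {κ : Kernel E E} {ν : Measure E}

lemma IsQSD.map_restrict_surv (hQSD : IsQSD P X S ν) (hX : ∀ n, Measurable (X n))
    (hS : MeasurableSet S) (hsupp : ν Sᶜ = 0) (hinit : P.map (X 0) = ν) (n : ℕ) :
    (P.restrict (surv X S n)).map (X n) = P (surv X S n) • ν := by
  ext B hB
  rw [Measure.map_apply (hX n) hB, Measure.restrict_apply (hX n hB), Measure.smul_apply,
    smul_eq_mul]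
  rcases n with _ | n
  · simp [← hinit, Measure.map_apply (hX 0) hB]
  · have hsurv : surv X S (n + 1) ⊆ X (n + 1) ⁻¹' S := surv_succ (X := X) n ▸ inter_subset_right
    calc P (X (n + 1) ⁻¹' B ∩ surv X S (n + 1))
        = P (X (n + 1) ⁻¹' (B ∩ S) ∩ surv X S (n + 1)) := by
          rw [preimage_inter, inter_assoc, inter_eq_right.2 hsurv]
      _ = ν (B ∩ S) * P (surv X S (n + 1)) := hQSD _ n.succ_pos _ inter_subset_right (hB.inter hS)
      _ = P (surv X S (n + 1)) * ν B := by rw [measure_inter_conull hsupp, mul_comm]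

lemma IsQSD.measure_surv_inter_preimage_succ (hQSD : IsQSD P X S ν) (hM : IsMarkov P X κ)
    (hS : MeasurableSet S) (hsupp : ν Sᶜ = 0) (hinit : P.map (X 0) = ν) (n : ℕ) {A : Set E}
    (hA : MeasurableSet A) :
    P (surv X S n ∩ X (n + 1) ⁻¹' A) = P (surv X S n) * P (X 1 ⁻¹' A) := by
  have h : ∀ n, P (surv X S n ∩ X (n + 1) ⁻¹' A) = P (surv X S n) * ∫⁻ y, κ y A ∂ν := fun n => by
    rw [hM.measure_inter_preimage_succ (measurableSet_past_surv hS n) hA,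
      ← lintegral_map (κ.measurable_coe hA) (hM.1 n), hQSD.map_restrict_surv hM.1 hS hsupp hinit,
      lintegral_smul_measure, smul_eq_mul]
  have h0 : ∫⁻ y, κ y A ∂ν = P (X 1 ⁻¹' A) := by simpa using (h 0).symm
  rw [h n, h0]

lemma IsQSD.measure_surv (hQSD : IsQSD P X S ν) (hM : IsMarkov P X κ)
    (hS : MeasurableSet S) (hsupp : ν Sᶜ = 0) (hinit : P.map (X 0) = ν) (n : ℕ) :
    P (surv X S n) = P (X 1 ⁻¹' S) ^ n := by
  induction n with
  | zero => simp
  | succ n ih =>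
    rw [surv_succ, hQSD.measure_surv_inter_preimage_succ hM hS hsupp hinit n hS, ih, pow_succ]

lemma IsQSD.measure_iInter_surv (hQSD : IsQSD P X S ν) (hM : IsMarkov P X κ)
    (hS : MeasurableSet S) (hsupp : ν Sᶜ = 0) (hinit : P.map (X 0) = ν)
    (hp : 0 < P (X 1 ⁻¹' Sᶜ)) :
    P (⋂ n, surv X S n) = 0 := by
  rw [preimage_compl, prob_compl_eq_one_sub (hM.1 1 hS), tsub_pos_iff_lt] at hp
  refine le_antisymm (ge_of_tendsto' (ENNReal.tendsto_pow_atTop_nhds_zero_of_lt_one hp)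
    fun n => ?_) bot_le
  exact (measure_mono (iInter_subset _ n)).trans (hQSD.measure_surv hM hS hsupp hinit n).le

lemma IsQSD.measure_exitTime_eq_zero (hQSD : IsQSD P X S ν) (hM : IsMarkov P X κ)
    (hS : MeasurableSet S) (hsupp : ν Sᶜ = 0) (hinit : P.map (X 0) = ν)
    (hp : 0 < P (X 1 ⁻¹' Sᶜ)) :
    P {ω | exitTime X S ω = 0} = 0 := by
  have hX0 : P (X 0 ⁻¹' Sᶜ) = 0 :=
    Measure.preimage_null_of_map_null (hM.1 0).aemeasurable (hinit ▸ hsupp)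
  refine measure_mono_null (fun ω hω => ?_)
    (measure_union_null hX0 (hQSD.measure_iInter_surv hM hS hsupp hinit hp))
  exact (exitTime_eq_zero_iff.1 hω).imp id fun h =>
    mem_iInter.2 fun n => mem_iInter₂.2 fun i _ => h i

lemma IsQSD.measure_exitTime_eq_succ_inter (hQSD : IsQSD P X S ν) (hM : IsMarkov P X κ)
    (hS : MeasurableSet S) (hsupp : ν Sᶜ = 0) (hinit : P.map (X 0) = ν) (k : ℕ) {A : Set E}
    (hA : MeasurableSet A) :
    P ({ω | exitTime X S ω = k + 1} ∩ {ω | X (exitTime X S ω) ω ∈ A})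
      = P (surv X S k) * P (X 1 ⁻¹' (A ∩ Sᶜ)) := by
  have hX0 : P (X 0 ⁻¹' S)ᶜ = 0 :=
    Measure.preimage_null_of_map_null (hM.1 0).aemeasurable (hinit ▸ hsupp)
  rw [exitTime_eq_succ_inter_exitPos, inter_comm, measure_inter_conull hX0,
    hQSD.measure_surv_inter_preimage_succ hM hS hsupp hinit k (hA.inter hS.compl)]

end QSD

end ParRep

theorem qsd_exit_time_position_independent_general
    {E Ω : Type*} [MeasurableSpace E] [MeasurableSpace Ω]
    (P : Measure Ω) [IsProbabilityMeasure P]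
    (X : ℕ → Ω → E) (κ : ProbabilityTheory.Kernel E E) (S : Set E) (ν : Measure E)
    (hS : MeasurableSet S)
    (hMarkov : ParRep.IsMarkov P X κ)
    (hsupp : ν Sᶜ = 0)
    (hinit : P.map (X 0) = ν)
    (hQSD : ParRep.IsQSD P X S ν)
    (hp : 0 < P (X 1 ⁻¹' Sᶜ)) :
    ∀ (k : ℕ) (A : Set E), MeasurableSet A →
      P ({ω | ParRep.exitTime X S ω = k} ∩ {ω | X (ParRep.exitTime X S ω) ω ∈ A})
        = P {ω | ParRep.exitTime X S ω = k}
          * P {ω | X (ParRep.exitTime X S ω) ω ∈ A} := by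
  intro k A hA
  refine measure_inter_eq_mul_of_factorization (ParRep.measurable_exitTime hMarkov.1 hS)
    (ParRep.measurable_exitPos hMarkov.1 hS)
    (fun k => k.casesOn 0 fun k => P (ParRep.surv X S k)) (fun A => P (X 1 ⁻¹' (A ∩ Sᶜ))) ?_ k hA
  rintro (_ | k) A hA
  · simp [measure_mono_null inter_subset_left
      (hQSD.measure_exitTime_eq_zero hMarkov hS hsupp hinit hp)]
  · exact hQSD.measure_exitTime_eq_succ_inter hMarkov hS hsupp hinit k hA

/-- If `ν` is a QSD of the Markov chain in `S`, then starting from `ν`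
the first exit time from `S` and the exit position are independent. -/
theorem qsd_exit_time_position_independent
    {E Ω : Type*} [MeasurableSpace E] [MeasurableSpace Ω]
    (P : Measure Ω) [IsProbabilityMeasure P]
    (X : ℕ → Ω → E) (κ : ProbabilityTheory.Kernel E E) (S : Set E) (ν : Measure E)
    (hS : MeasurableSet S)
    (hMarkov : ParRep.IsMarkov P X κ)
    (hν : IsProbabilityMeasure ν) (hsupp : ν Sᶜ = 0)
    (hinit : P.map (X 0) = ν)
    (hQSD : ParRep.IsQSD P X S ν)
    (hp : 0 < P (X 1 ⁻¹' Sᶜ)) :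
    ∀ (k : ℕ) (A : Set E), MeasurableSet A →
      P ({ω | ParRep.exitTime X S ω = k} ∩ {ω | X (ParRep.exitTime X S ω) ω ∈ A})
        = P {ω | ParRep.exitTime X S ω = k}
          * P {ω | X (ParRep.exitTime X S ω) ω ∈ A} :=
  qsd_exit_time_position_independent_general P X κ S ν hS hMarkov hsupp hinit hQSD hp
end
end

section
/- Let τ^1, ..., τ^N be independent geometric random variables with the same parameter p ∈ (0,1) (each taking values in {1,2,...}). For a polling time T, define M to be the smallest integer with min_i τ^i ≤ MT, K the smallest index i with τ^i ≤ MT, and τ_acc = (M−1)T·N + (K−1)T + (τ^K − (M−1)T). Then τ_acc is a geometric random variable with parameter p. -/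
open MeasureTheory ProbabilityTheory Filter
open scoped Classical

noncomputable section

lemma tail_geom {Ω : Type*} [MeasurableSpace Ω] (P : Measure Ω) [IsProbabilityMeasure P]
    (X : Ω → ℕ) (hX : Measurable X) (p : ℝ) (hp0 : 0 < p) (hp1 : p < 1)
    (hgeom : ∀ k, 1 ≤ k → (P {ω | X ω = k}).toReal = (1 - p) ^ (k - 1) * p) :
    ∀ n, (P {ω | n < X ω}).toReal = (1 - p) ^ n := by
  intro n
  have hset : {ω | n < X ω} = ⋃ j : ℕ, {ω | X ω = n + 1 + j} := by
    ext ω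
    simp only [Set.mem_setOf_eq, Set.mem_iUnion]
    constructor
    · intro h; exact ⟨X ω - (n + 1), by omega⟩
    · rintro ⟨j, hj⟩; omega
  have hdisj : Pairwise (Function.onFun Disjoint fun j : ℕ => {ω | X ω = n + 1 + j}) := by
    intro a b hab
    simp only [Function.onFun, Set.disjoint_left, Set.mem_setOf_eq]
    intro ω h1 h2; omega
  have hmsets : ∀ j : ℕ, MeasurableSet {ω | X ω = n + 1 + j} := fun j =>
    hX (measurableSet_singleton _)
  rw [hset, measure_iUnion hdisj hmsets,
    ENNReal.tsum_toReal_eq (fun j => measure_ne_top P _)]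
  have hterm : ∀ j : ℕ, (P {ω | X ω = n + 1 + j}).toReal = (1 - p) ^ n * ((1 - p) ^ j * p) := by
    intro j
    have := hgeom (n + 1 + j) (by omega)
    rw [show n + 1 + j - 1 = n + j by omega] at this
    rw [this, pow_add]; ring
  rw [tsum_congr hterm, tsum_mul_left, tsum_mul_right,
    tsum_geometric_of_lt_one (by linarith) (by linarith)]
  have : (1 - (1 - p))⁻¹ * p = 1 := by
    rw [show 1 - (1 - p) = p by ring]
    field_simp
  rw [this, mul_one]

lemma decomp_unique {N T : ℕ} (hT : 1 ≤ T)
    {m i s m' i' s' : ℕ} (hi : i < N) (hs1 : 1 ≤ s) (hs2 : s ≤ T)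
    (hi' : i' < N) (hs1' : 1 ≤ s') (hs2' : s' ≤ T)
    (heq : N * T * (m - 1) + i * T + (s - 1) = N * T * (m' - 1) + i' * T + (s' - 1))
    (hm : 1 ≤ m) (hm' : 1 ≤ m') :
    m = m' ∧ i = i' ∧ s = s' := by
  have hNT : 0 < N * T := Nat.mul_pos (by omega) (by omega)
  have hbound : ∀ j t : ℕ, j < N → 1 ≤ t → t ≤ T → j * T + (t - 1) < N * T := by
    intro j t hj ht1 ht2
    have h1 : (j + 1) * T ≤ N * T := Nat.mul_le_mul_right T (by omega)
    have h2 : j * T + T = (j + 1) * T := by ring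
    omega
  set a := N * T * (m - 1) + i * T + (s - 1) with ha
  have key : ∀ j t mm : ℕ, j < N → 1 ≤ t → t ≤ T →
      a = N * T * (mm - 1) + j * T + (t - 1) →
      a / (N * T) = mm - 1 ∧ a % (N * T) = j * T + (t - 1) := by
    intro j t mm hj ht1 ht2 haeq
    exact (Nat.div_mod_unique hNT).2 ⟨by omega, hbound j t hj ht1 ht2⟩
  have k1 := key i s m hi hs1 hs2 rfl
  have k2 := key i' s' m' hi' hs1' hs2' heq
  have hr : i * T + (s - 1) = i' * T + (s' - 1) := by omega
  have key2 : ∀ j t : ℕ, 1 ≤ t → t ≤ T → j * T + (t - 1) = i * T + (s - 1) →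
      (i * T + (s - 1)) / T = j ∧ (i * T + (s - 1)) % T = t - 1 := by
    intro j t ht1 ht2 hjt
    refine (Nat.div_mod_unique (by omega)).2 ⟨by rw [Nat.mul_comm T j]; omega, by omega⟩
  have k3 := key2 i s hs1 hs2 rfl
  have k4 := key2 i' s' hs1' hs2' hr.symm
  omega

lemma exp_calc (T a b i c : ℕ) :
    i * ((a + 1) * T) + (a * T + b) + c * (a * T) = (i + 1 + c) * T * a + i * T + b := by ring



/-- If `τ 0, ..., τ (N-1)` are i.i.d. geometric(`p`) random variables and
`τacc` is the accumulated time of the Parallel Step with polling time `T` (with `M` the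
first polling block containing an exit and `K` the least exiting replica index), then
`τacc` is geometric with parameter `p`. -/
theorem accumulated_time_geometric
    {Ω : Type*} [MeasurableSpace Ω] (P : Measure Ω) [IsProbabilityMeasure P]
    (N : ℕ) (hN : 1 ≤ N) (T : ℕ) (hT : 1 ≤ T)
    (τ : ℕ → Ω → ℕ) (hmeas : ∀ i, Measurable (τ i))
    (hindep : ProbabilityTheory.iIndepFun (fun i => τ i) P)
    (p : ℝ) (hp0 : 0 < p) (hp1 : p < 1)
    (hgeom : ∀ i k, 1 ≤ k → (P {ω | τ i ω = k}).toReal = (1 - p) ^ (k - 1) * p)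
    (M : Ω → ℕ) (hM : ∀ ω, M ω = sInf {m | 1 ≤ m ∧ ∃ i < N, τ i ω ≤ m * T})
    (K : Ω → ℕ) (hK : ∀ ω, K ω = sInf {i | i < N ∧ τ i ω ≤ M ω * T})
    (τacc : Ω → ℕ)
    (hτacc : ∀ ω, τacc ω
      = N * (M ω - 1) * T + K ω * T + (τ (K ω) ω - (M ω - 1) * T)) :
    ∀ k, 1 ≤ k → (P {ω | τacc ω = k}).toReal = (1 - p) ^ (k - 1) * p := by
  intro k hk
  have htail : ∀ j n, (P {ω | n < τ j ω}).toReal = (1 - p) ^ n :=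
    fun j => tail_geom P (τ j) (hmeas j) p hp0 hp1 (hgeom j)
  -- the set where some replica has value 0 is null
  have hzero : ∀ j, P {ω | τ j ω = 0} = 0 := by
    intro j
    have h1 : (P {ω | 0 < τ j ω}).toReal = 1 := by simpa using htail j 0
    have h2 : P {ω | 0 < τ j ω} = 1 := by rwa [ENNReal.toReal_eq_one_iff] at h1
    have hms : MeasurableSet {ω | 0 < τ j ω} := hmeas j measurableSet_Ioi
    have hce : {ω | τ j ω = 0} = {ω | 0 < τ j ω}ᶜ := by
      ext ω; simp [Nat.pos_iff_ne_zero]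
    rw [hce, measure_compl hms (measure_ne_top P _), h2, measure_univ]
    simp
  set G : Set Ω := {ω | ∀ j, 0 < τ j ω} with hG
  have hGc : P Gᶜ = 0 := by
    have hsub : Gᶜ ⊆ ⋃ j : ℕ, {ω | τ j ω = 0} := by
      intro ω hω
      simp only [hG, Set.mem_compl_iff, Set.mem_setOf_eq, not_forall] at hω
      obtain ⟨j, hj⟩ := hω
      refine Set.mem_iUnion.2 ⟨j, ?_⟩
      simp only [Set.mem_setOf_eq]
      omega
    exact measure_mono_null hsub (measure_iUnion_null fun j => hzero j)
  -- decompose k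
  have hNT : 0 < N * T := Nat.mul_pos (by omega) (by omega)
  obtain ⟨m, i, s, hm1le, hiN, hs1, hs2, hdec⟩ :
      ∃ m i s : ℕ, 1 ≤ m ∧ i < N ∧ 1 ≤ s ∧ s ≤ T ∧
        k - 1 = N * T * (m - 1) + i * T + (s - 1) := by
    refine ⟨(k - 1) / (N * T) + 1, ((k - 1) % (N * T)) / T, ((k - 1) % (N * T)) % T + 1,
      Nat.succ_le_succ (Nat.zero_le _), ?_, Nat.succ_le_succ (Nat.zero_le _), ?_, ?_⟩
    · exact (Nat.div_lt_iff_lt_mul (by omega)).2 (Nat.mod_lt _ hNT)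
    · have := Nat.mod_lt ((k - 1) % (N * T)) (show 0 < T by omega); omega
    · have h1 := Nat.div_add_mod (k - 1) (N * T)
      have h2 := Nat.div_add_mod ((k - 1) % (N * T)) T
      simp only [Nat.add_sub_cancel]
      rw [Nat.mul_comm (((k - 1) % (N * T)) / T) T]
      omega
  have hmT : (m - 1) * T + T = m * T := by
    obtain ⟨a, ha⟩ : ∃ a, m = a + 1 := ⟨m - 1, by omega⟩
    rw [ha]; simp [Nat.add_sub_cancel]; ring
  set A : Set Ω := {ω | (∀ j < i, m * T < τ j ω) ∧ τ i ω = (m - 1) * T + s ∧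
      ∀ j, i < j → j < N → (m - 1) * T < τ j ω} with hA
  -- pointwise characterization on G
  have hchar : ∀ ω ∈ G, (τacc ω = k ↔ ω ∈ A) := by
    intro ω hGω
    have hpos : ∀ j, 0 < τ j ω := hGω
    have hMne : {m' | 1 ≤ m' ∧ ∃ i' < N, τ i' ω ≤ m' * T}.Nonempty := by
      refine ⟨τ 0 ω, hpos 0, 0, by omega, ?_⟩
      calc τ 0 ω = τ 0 ω * 1 := (Nat.mul_one _).symm
        _ ≤ τ 0 ω * T := Nat.mul_le_mul_left _ hT
    have hMmem : 1 ≤ M ω ∧ ∃ i' < N, τ i' ω ≤ M ω * T := by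
      rw [hM ω]; exact Nat.sInf_mem hMne
    have hMmin : ∀ m'', m'' < M ω → ¬(1 ≤ m'' ∧ ∃ i' < N, τ i' ω ≤ m'' * T) := by
      intro m'' hlt
      exact Nat.notMem_of_lt_sInf (by rw [hM ω] at hlt; exact hlt)
    have hKne : {j | j < N ∧ τ j ω ≤ M ω * T}.Nonempty := by
      obtain ⟨i0, hi0N, hi0le⟩ := hMmem.2
      exact ⟨i0, hi0N, hi0le⟩
    have hKmem : K ω < N ∧ τ (K ω) ω ≤ M ω * T := by
      rw [hK ω]; exact Nat.sInf_mem hKne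
    have hKmin : ∀ j, j < K ω → M ω * T < τ j ω := by
      intro j hj
      have hnj : ¬(j < N ∧ τ j ω ≤ M ω * T) :=
        Nat.notMem_of_lt_sInf (by rw [hK ω] at hj; exact hj)
      push_neg at hnj
      exact hnj (by omega)
    have hall : ∀ j, j < N → (M ω - 1) * T < τ j ω := by
      intro j hj
      rcases Nat.eq_or_lt_of_le hMmem.1 with h1 | h2
      · have hz : M ω - 1 = 0 := by omega
        rw [hz, Nat.zero_mul]; exact hpos j
      · have hnm := hMmin (M ω - 1) (by omega)
        push_neg at hnm
        by_contra hcon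
        push_neg at hcon
        exact absurd hcon (by simpa using hnm (by omega) j hj)
    have hMT' : (M ω - 1) * T + T = M ω * T := by
      obtain ⟨a, ha⟩ : ∃ a, M ω = a + 1 := ⟨M ω - 1, by omega⟩
      rw [ha]; simp [Nat.add_sub_cancel]; ring
    constructor
    · intro hacc
      set s' := τ (K ω) ω - (M ω - 1) * T with hs'def
      have hτKgt : (M ω - 1) * T < τ (K ω) ω := hall _ hKmem.1
      have hs'1 : 1 ≤ s' := by omega
      have hs'2 : s' ≤ T := by have := hKmem.2; omega
      have hdec' : k - 1 = N * T * (M ω - 1) + K ω * T + (s' - 1) := by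
        have h := hτacc ω
        have hmul : N * (M ω - 1) * T = N * T * (M ω - 1) := by ring
        omega
      have heq : N * T * (m - 1) + i * T + (s - 1)
          = N * T * (M ω - 1) + K ω * T + (s' - 1) := by omega
      obtain ⟨hmeq, hieq, hseq⟩ :=
        decomp_unique hT hiN hs1 hs2 hKmem.1 hs'1 hs'2 heq hm1le hMmem.1
      refine ⟨?_, ?_, ?_⟩
      · intro j hj; rw [hmeq]; exact hKmin j (by omega)
      · rw [hieq, hmeq]; omega
      · intro j h1 h2; rw [hmeq]; exact hall j h2
    · rintro ⟨hA1, hA2, hA3⟩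
      have hτile : τ i ω ≤ m * T := by omega
      have hMeq : M ω = m := by
        have hmem : m ∈ {m' | 1 ≤ m' ∧ ∃ i' < N, τ i' ω ≤ m' * T} := ⟨hm1le, i, hiN, hτile⟩
        have hle : M ω ≤ m := by rw [hM ω]; exact Nat.sInf_le hmem
        rcases Nat.lt_or_ge (M ω) m with hlt | hge
        · exfalso
          obtain ⟨j, hjN, hjle⟩ := hMmem.2
          have hMle : M ω * T ≤ (m - 1) * T := Nat.mul_le_mul_right T (by omega)
          rcases lt_trichotomy j i with hji | rfl | hij
          · have h5 := hA1 j hji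
            have h6 : (m - 1) * T ≤ m * T := Nat.mul_le_mul_right T (by omega)
            omega
          · omega
          · have := hA3 j hij hjN; omega
        · omega
      have hKeq : K ω = i := by
        have hmem : i ∈ {j | j < N ∧ τ j ω ≤ M ω * T} := ⟨hiN, by rw [hMeq]; exact hτile⟩
        have hle : K ω ≤ i := by rw [hK ω]; exact Nat.sInf_le hmem
        rcases Nat.lt_or_ge (K ω) i with hlt | hge
        · exfalso
          have h1 := hA1 (K ω) hlt
          have h2 := hKmem.2
          rw [hMeq] at h2; omega
        · omega
      rw [hτacc ω, hMeq, hKeq, hA2]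
      have hmul : N * (m - 1) * T = N * T * (m - 1) := by ring
      omega
  -- replace the event by A
  have hPA : P {ω | τacc ω = k} = P A := by
    have hsub1 : {ω | τacc ω = k} \ A ⊆ Gᶜ := by
      intro ω hω
      by_contra hG'
      rw [Set.notMem_compl_iff] at hG'
      exact hω.2 ((hchar ω hG').1 hω.1)
    have hsub2 : A \ {ω | τacc ω = k} ⊆ Gᶜ := by
      intro ω hω
      by_contra hG'
      rw [Set.notMem_compl_iff] at hG'
      exact hω.2 ((hchar ω hG').2 hω.1)
    refine measure_congr ?_
    rw [MeasureTheory.ae_eq_set]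
    exact ⟨measure_mono_null hsub1 hGc, measure_mono_null hsub2 hGc⟩
  rw [hPA]
  -- express A as an intersection of independent events
  set C : ℕ → Set ℕ := fun j =>
    if j < i then Set.Ioi (m * T) else if j = i then {(m - 1) * T + s}
    else Set.Ioi ((m - 1) * T) with hC
  have hAeq : A = ⋂ j ∈ Finset.range N, τ j ⁻¹' C j := by
    ext ω
    simp only [hA, Set.mem_setOf_eq, Set.mem_iInter, Finset.mem_range, Set.mem_preimage, hC]
    constructor
    · rintro ⟨h1, h2, h3⟩ j hj
      by_cases hji : j < i
      · simpa [hji] using h1 j hji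
      · by_cases hjeq : j = i
        · subst hjeq; simpa [hji] using h2
        · simpa [hji, hjeq] using h3 j (by omega) hj
    · intro h
      refine ⟨fun j hj => ?_, ?_, fun j h1 h2 => ?_⟩
      · have := h j (by omega); simpa [hj] using this
      · have := h i hiN; simpa using this
      · have := h j h2
        simpa [show ¬ j < i by omega, show ¬ j = i by omega] using this
  have hCmeas : ∀ j, MeasurableSet (C j) := by
    intro j
    rw [hC]
    dsimp only
    split_ifs
    · exact measurableSet_Ioi
    · exact measurableSet_singleton _
    · exact measurableSet_Ioi
  have hprod := hindep.measure_inter_preimage_eq_mul (Finset.range N)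
    (sets := C) (fun j _ => hCmeas j)
  rw [hAeq, hprod, ENNReal.toReal_prod]
  have hfac : ∀ j, (P (τ j ⁻¹' C j)).toReal =
      if j < i then (1 - p) ^ (m * T)
      else if j = i then (1 - p) ^ ((m - 1) * T + s - 1) * p
      else (1 - p) ^ ((m - 1) * T) := by
    intro j
    rw [hC]
    dsimp only
    split_ifs with h1 h2
    · exact htail j (m * T)
    · exact hgeom j ((m - 1) * T + s) (by omega)
    · exact htail j ((m - 1) * T)
  rw [Finset.prod_congr rfl (fun j _ => hfac j)]
  -- split the product
  rw [Finset.range_eq_Ico, ← Finset.prod_Ico_consecutive _ (Nat.zero_le i) (le_of_lt hiN),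
    Finset.prod_eq_prod_Ico_succ_bot hiN]
  have e1 : (∏ j ∈ Finset.Ico 0 i, if j < i then (1 - p) ^ (m * T)
      else if j = i then (1 - p) ^ ((m - 1) * T + s - 1) * p
      else (1 - p) ^ ((m - 1) * T)) = ((1 - p) ^ (m * T)) ^ i := by
    rw [Finset.prod_congr rfl (fun j hj => ?_), Finset.prod_const, Nat.card_Ico, Nat.sub_zero]
    rw [Finset.mem_Ico] at hj
    simp [hj.2]
  have e2 : (if i < i then (1 - p) ^ (m * T)
      else if i = i then (1 - p) ^ ((m - 1) * T + s - 1) * p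
      else (1 - p) ^ ((m - 1) * T)) = (1 - p) ^ ((m - 1) * T + s - 1) * p := by
    simp
  have e3 : (∏ j ∈ Finset.Ico (i + 1) N, if j < i then (1 - p) ^ (m * T)
      else if j = i then (1 - p) ^ ((m - 1) * T + s - 1) * p
      else (1 - p) ^ ((m - 1) * T)) = ((1 - p) ^ ((m - 1) * T)) ^ (N - (i + 1)) := by
    rw [Finset.prod_congr rfl (fun j hj => ?_), Finset.prod_const, Nat.card_Ico]
    rw [Finset.mem_Ico] at hj
    simp [show ¬ j < i by omega, show ¬ j = i by omega]
  rw [e1, e2, e3]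
  have hexp : i * (m * T) + ((m - 1) * T + s - 1) + (N - (i + 1)) * ((m - 1) * T) = k - 1 := by
    obtain ⟨a, ha⟩ : ∃ a, m = a + 1 := ⟨m - 1, by omega⟩
    obtain ⟨b, hb⟩ : ∃ b, s = b + 1 := ⟨s - 1, by omega⟩
    obtain ⟨c, hc⟩ : ∃ c, N = i + 1 + c := ⟨N - (i + 1), by omega⟩
    subst ha hb hc
    simp only [Nat.add_sub_cancel, show i + 1 + c - (i + 1) = c from by omega] at hdec ⊢
    have h1 := exp_calc T a b i c
    have h2 : a * T + (b + 1) - 1 = a * T + b := by omega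
    rw [h2]
    omega
  rw [← pow_mul, ← pow_mul, ← hexp, pow_add, pow_add]
  ring
end
end

section
/- The expected contribution to f_sim from a single Parallel Step of ParRep equals (P_ν(X_1 ∉ S)^{-1} − 1) · ∫_S f dν, independently of the number N of replicas and the polling time T_poll. -/
open MeasureTheory ProbabilityTheory Filter
open scoped Classical

noncomputable section

/-!
Write the contribution as `∑_{j ≥ 1} 1{j < τacc} f (V j)`. On the event `{j < τacc}` the law of
`V j` is `P (j < τacc) • ν`, so the `j`-th term has expectation `(1 - p) ^ j * ∫ f dν`. Since `f`
is bounded these expectations are absolutely summable, sum and integral may be exchanged, and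
`∑_{j ≥ 1} (1 - p) ^ j = 1 / p - 1`.
-/

section

variable {E Ω : Type*} [MeasurableSpace E] [MeasurableSpace Ω]

theorem Finset.sum_Icc_one_sub_one_eq_tsum {M : Type*} [AddCommMonoid M] [TopologicalSpace M]
    (n : ℕ) (g : ℕ → M) :
    ∑ j ∈ Finset.Icc 1 (n - 1), g j = ∑' j, if j + 1 < n then g (j + 1) else 0 := by
  have hIcc : Finset.Icc 1 (n - 1) = Finset.Ico 1 n := by
    ext
    simp only [Finset.mem_Icc, Finset.mem_Ico]
    omega
  rw [hIcc, Finset.sum_Ico_eq_sum_range, tsum_eq_sum (s := Finset.range (n - 1))]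
  · refine Finset.sum_congr rfl fun j hj => ?_
    rw [if_pos (by simp only [Finset.mem_range] at hj; omega), add_comm]
  · intro j hj
    rw [if_neg (by simp only [Finset.mem_range] at hj; omega)]

theorem hasSum_one_sub_pow_succ {p : ℝ} (hp0 : 0 < p) (hp1 : p ≤ 1) :
    HasSum (fun j : ℕ => (1 - p) ^ (j + 1)) (1 / p - 1) := by
  have h := (hasSum_geometric_of_lt_one (by linarith) (by linarith : 1 - p < 1)).mul_left (1 - p)
  have hsum : (1 - p) * (1 - (1 - p))⁻¹ = 1 / p - 1 := by
    rw [sub_sub_cancel]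
    field_simp
  simpa only [← pow_succ', hsum] using h

theorem measure_lt_toReal_eq_pow_of_geometric {P : Measure Ω} [IsFiniteMeasure P] {τ : Ω → ℕ}
    (hτ : Measurable τ) {p : ℝ} (hp0 : 0 < p) (hp1 : p ≤ 1)
    (hgeom : ∀ k, 1 ≤ k → (P {ω | τ ω = k}).toReal = (1 - p) ^ (k - 1) * p) (j : ℕ) :
    (P {ω | j < τ ω}).toReal = (1 - p) ^ j := by
  have hunion : {ω | j < τ ω} = ⋃ k : ℕ, {ω | τ ω = j + 1 + k} := by
    ext ω
    simp only [Set.mem_ofPred_eq, Set.mem_iUnion]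
    exact ⟨fun h => ⟨τ ω - (j + 1), by omega⟩, fun ⟨k, hk⟩ => by omega⟩
  have hdisj : Pairwise (Function.onFun Disjoint fun k : ℕ => {ω | τ ω = j + 1 + k}) :=
    fun a b hab => Set.disjoint_left.mpr fun ω (ha : τ ω = _) (hb : τ ω = _) => hab (by omega)
  have hterm (k : ℕ) : (P {ω | τ ω = j + 1 + k}).toReal = (1 - p) ^ j * (p * (1 - p) ^ k) := by
    rw [hgeom _ (by omega), show j + 1 + k - 1 = j + k by omega, pow_add]
    ring
  rw [hunion, measure_iUnion hdisj fun k => hτ (measurableSet_singleton _),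
    ENNReal.tsum_toReal_eq fun k => measure_ne_top P _, tsum_congr hterm, tsum_mul_left,
    tsum_mul_left, tsum_geometric_of_lt_one (by linarith) (by linarith), sub_sub_cancel,
    mul_inv_cancel₀ hp0.ne', mul_one]

theorem map_restrict_eq_smul_of_forall_subset {P : Measure Ω} [IsFiniteMeasure P]
    {ν : Measure E} [IsProbabilityMeasure ν] {S : Set E} (hS : MeasurableSet S) (hνS : ν Sᶜ = 0)
    {W : Ω → E} (hW : Measurable W) {T : Set Ω}
    (h : ∀ A, MeasurableSet A → A ⊆ S → P (W ⁻¹' A ∩ T) = ν A * P T) :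
    (P.restrict T).map W = P T • ν := by
  set μ := (P.restrict T).map W
  have hμ : ∀ A ⊆ S, MeasurableSet A → μ A = (P T • ν) A := fun A hAS hA => by
    rw [Measure.map_apply hW hA, Measure.restrict_apply (hW hA), h A hA hAS, Measure.smul_apply,
      smul_eq_mul, mul_comm]
  have hνS' : ν S = 1 := by rw [← prob_compl_eq_zero_iff hS]; exact hνS
  have hμS : μ Sᶜ = 0 := by
    rw [measure_compl hS (measure_ne_top μ S), hμ S le_rfl hS, Measure.map_apply hW .univ,
      Measure.smul_apply, hνS']
    simp
  calc μ = μ.restrict S := (Measure.restrict_eq_self_of_ae_mem (ae_iff.mpr hμS)).symm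
    _ = (P T • ν).restrict S := (Measure.restrict_congr_meas hS).mpr hμ
    _ = P T • ν := Measure.restrict_eq_self_of_ae_mem (Measure.ae_smul_measure (ae_iff.mpr hνS) _)

theorem integral_indicator_comp_eq_mul {P : Measure Ω} [IsFiniteMeasure P]
    {ν : Measure E} [IsProbabilityMeasure ν] {S : Set E} (hS : MeasurableSet S) (hνS : ν Sᶜ = 0)
    {W : Ω → E} (hW : Measurable W) {T : Set Ω} (hT : MeasurableSet T)
    (h : ∀ A, MeasurableSet A → A ⊆ S → P (W ⁻¹' A ∩ T) = ν A * P T)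
    {f : E → ℝ} (hf : Measurable f) :
    ∫ ω, T.indicator (fun ω => f (W ω)) ω ∂P = (P T).toReal * ∫ x, f x ∂ν := by
  rw [integral_indicator hT, ← integral_map hW.aemeasurable hf.aestronglyMeasurable,
    map_restrict_eq_smul_of_forall_subset hS hνS hW h, integral_smul_measure, smul_eq_mul]

end

/-- The expected contribution to `f_sim` from a single Parallel Step
(the sum of `f` along the concatenated trajectory, excluding the final exit point,
where `τacc` is geometric(`p`) and each time-marginal before exit is `ν`) equals
`(p⁻¹ − 1) ∫_S f dν`, independently of `N` and the polling time. -/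
theorem parallel_step_expected_contribution
    {E Ω : Type*} [MeasurableSpace E] [MeasurableSpace Ω]
    (P : Measure Ω) [IsProbabilityMeasure P]
    (S : Set E) (hS : MeasurableSet S)
    (ν : Measure E) (hν : IsProbabilityMeasure ν) (hsupp : ν Sᶜ = 0)
    (f : E → ℝ) (hf : Measurable f) (hbdd : ∃ C, ∀ x, |f x| ≤ C)
    (p : ℝ) (hp0 : 0 < p) (hp1 : p < 1)
    (τacc : Ω → ℕ) (hτmeas : Measurable τacc)
    (hgeom : ∀ k, 1 ≤ k → (P {ω | τacc ω = k}).toReal = (1 - p) ^ (k - 1) * p)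
    (V : ℕ → Ω → E) (hVmeas : ∀ j, Measurable (V j))
    (hmarg : ∀ j, 1 ≤ j → ∀ A : Set E, MeasurableSet A → A ⊆ S →
      P ({ω | V j ω ∈ A} ∩ {ω | j < τacc ω}) = ν A * P {ω | j < τacc ω}) :
    ∫ ω, (∑ j ∈ Finset.Icc 1 (τacc ω - 1), f (V j ω)) ∂P
      = (1 / p - 1) * ∫ x, f x ∂ν := by
  obtain ⟨C, hC⟩ := hbdd
  have hT (j : ℕ) : MeasurableSet {ω | j < τacc ω} := hτmeas measurableSet_Ioi
  have hterm (g : E → ℝ) (hg : Measurable g) (j : ℕ) :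
      ∫ ω, {ω | j + 1 < τacc ω}.indicator (fun ω => g (V (j + 1) ω)) ω ∂P
        = (1 - p) ^ (j + 1) * ∫ x, g x ∂ν := by
    rw [integral_indicator_comp_eq_mul hS hsupp (hVmeas _) (hT _) (hmarg _ (by omega)) hg,
      measure_lt_toReal_eq_pow_of_geometric hτmeas hp0 hp1.le hgeom]
  set F : ℕ → Ω → ℝ := fun j => {ω | j + 1 < τacc ω}.indicator fun ω => f (V (j + 1) ω)
  have hF_int (j : ℕ) : Integrable (F j) P :=
    .of_bound ((hf.comp (hVmeas _)).indicator (hT _)).aestronglyMeasurable C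
      (ae_of_all _ fun ω => (norm_indicator_le_norm_self _ ω).trans (hC _))
  have hF_norm : Summable fun j => ∫ ω, ‖F j ω‖ ∂P := by
    simp only [F, norm_indicator_eq_indicator_norm, Real.norm_eq_abs,
      hterm (fun x => |f x|) hf.abs]
    exact ((hasSum_one_sub_pow_succ hp0 hp1.le).mul_right _).summable
  calc ∫ ω, (∑ j ∈ Finset.Icc 1 (τacc ω - 1), f (V j ω)) ∂P = ∫ ω, ∑' j, F j ω ∂P := by
        simp only [Finset.sum_Icc_one_sub_one_eq_tsum, F, Set.indicator_apply]
        rfl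
    _ = ∑' j, (1 - p) ^ (j + 1) * ∫ x, f x ∂ν := by
        rw [← integral_tsum_of_summable_integral_norm hF_int hF_norm]
        exact tsum_congr (hterm f hf)
    _ = (1 / p - 1) * ∫ x, f x ∂ν := ((hasSum_one_sub_pow_succ hp0 hp1.le).mul_right _).tsum_eq
end
end

section
/- For a Harris chain (Z_n) with auxiliary chain (Z̄_n), and f bounded measurable on Σ with f̄ defined on Σ ∪ {σ} by f̄ = f on Σ and f̄(σ) = ∫_B f dρ, one has E_ξ[f(Z_n)] = E_{ξ̄}[f̄(Z̄_n)] for every initial distribution ξ on Σ (extended to ξ̄ with ξ̄(σ) = 0) and every n ≥ 0. -/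
open MeasureTheory ProbabilityTheory Filter
open scoped Classical

noncomputable section

/-! The kernel `Λ = collapse ρ`, sending `inl x` to `δ_x` and the atom to `ρ`, intertwines the
two chains: `Λ ∘ κbar = κ ∘ Λ`. On `A` the auxiliary kernel removes the mass `ε ρ` from `κ x`
and puts it on the atom, and `Λ` hands it back as `ε ρ`; from the atom both sides are `ρ`
followed by one step of `κ`. Iterating, the law of `Z n` is `Λ` applied to the law of `Z̄ n`,
and integrating `f` against `Λ` produces exactly `f̄`. -/

namespace MeasureTheory.Measure

variable {α β γ : Type*} [MeasurableSpace α] [MeasurableSpace β] [MeasurableSpace γ]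

lemma bind_map (μ : Measure α) {g : α → β} (hg : Measurable g) {f : β → Measure γ}
    (hf : Measurable f) : (μ.map g).bind f = μ.bind (f ∘ g) := by
  rw [bind, map_map hf hg, bind]

lemma integral_comp {E : Type*} [NormedAddCommGroup E] [NormedSpace ℝ E]
    {μ : Measure α} {κ : Kernel α β} {f : β → E} (hf : Integrable f (κ ∘ₘ μ)) :
    ∫ y, f y ∂(κ ∘ₘ μ) = ∫ x, ∫ y, f y ∂κ x ∂μ := by
  rw [comp_eq_comp_const_apply] at hf ⊢
  rw [Kernel.integral_comp hf, Kernel.const_apply]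

end MeasureTheory.Measure

namespace ParRep

section Iterates

variable {α β : Type*} [MeasurableSpace α] [MeasurableSpace β]

lemma iterMeasure_succ (κ : Kernel α α) (μ : Measure α) (n : ℕ) :
    iterMeasure κ μ (n + 1) = κ ∘ₘ iterMeasure κ μ n := rfl

instance isProbabilityMeasure_iterMeasure (κ : Kernel α α) [IsMarkovKernel κ]
    (μ : Measure α) [IsProbabilityMeasure μ] (n : ℕ) :
    IsProbabilityMeasure (iterMeasure κ μ n) := by
  induction n with
  | zero => assumption
  | succ n ih => rw [iterMeasure_succ]; infer_instance

lemma comp_iterMeasure_of_comp_eq {κ : Kernel α α} {η : Kernel β β} {Λ : Kernel β α}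
    (h : Λ ∘ₖ η = κ ∘ₖ Λ) (μ : Measure β) (n : ℕ) :
    Λ ∘ₘ iterMeasure η μ n = iterMeasure κ (Λ ∘ₘ μ) n := by
  induction n with
  | zero => rfl
  | succ n ih =>
    rw [iterMeasure_succ, iterMeasure_succ, Measure.comp_assoc, h, ← Measure.comp_assoc, ih]

end Iterates

section Collapse

variable {σ : Type*} [MeasurableSpace σ] {κ : Kernel σ σ} {ε : ℝ} {A B : Set σ}
  {ρ : Measure σ}

lemma IsHarris.smul_le (h : IsHarris κ ε A B ρ) (hB : MeasurableSet B) {x : σ} (hx : x ∈ A) :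
    ENNReal.ofReal ε • ρ ≤ κ x := by
  obtain ⟨-, -, hρB, -, hmin⟩ := h
  refine Measure.le_iff.2 fun s hs => ?_
  calc (ENNReal.ofReal ε • ρ) s = ENNReal.ofReal ε * ρ (s ∩ B) := by
        rw [Measure.smul_apply, smul_eq_mul, measure_inter_conull hρB]
    _ ≤ κ x (s ∩ B) := hmin x hx _ (hs.inter hB) Set.inter_subset_right
    _ ≤ κ x s := measure_mono Set.inter_subset_left

variable (ρ) in
def collapse : Kernel (σ ⊕ Unit) σ where
  toFun := Sum.elim Measure.dirac fun _ => ρ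
  measurable' := Measure.measurable_dirac.sumElim measurable_const

@[simp]
lemma collapse_inl (x : σ) : collapse ρ (Sum.inl x) = Measure.dirac x := rfl

@[simp]
lemma collapse_inr (u : Unit) : collapse ρ (Sum.inr u) = ρ := rfl

lemma collapse_comp_map_inl (μ : Measure σ) : collapse ρ ∘ₘ μ.map Sum.inl = μ :=
  (Measure.bind_map μ measurable_inl (collapse ρ).measurable).trans Measure.bind_dirac

lemma integral_collapse_comp {E : Type*} [NormedAddCommGroup E] [NormedSpace ℝ E]
    [CompleteSpace E] {f : σ → E} (hf : StronglyMeasurable f) {μ : Measure (σ ⊕ Unit)}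
    (hint : Integrable f (collapse ρ ∘ₘ μ)) :
    ∫ x, f x ∂(collapse ρ ∘ₘ μ) = ∫ y, Sum.elim f (fun _ => ∫ x, f x ∂ρ) y ∂μ := by
  rw [Measure.integral_comp hint]
  congr 1 with y
  rcases y with x | u
  · exact integral_dirac' f x hf
  · rfl

variable {κbar : Kernel (σ ⊕ Unit) (σ ⊕ Unit)}

lemma collapse_comp_auxKernel_inl [IsFiniteMeasure ρ] (haux : IsAuxKernel κ A ε ρ κbar)
    (hle : ∀ x ∈ A, ENNReal.ofReal ε • ρ ≤ κ x) (x : σ) :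
    collapse ρ ∘ₘ κbar (Sum.inl x) = κ x := by
  by_cases hx : x ∈ A
  · have : IsFiniteMeasure (ENNReal.ofReal ε • ρ) := ⟨by simp [ENNReal.mul_lt_top]⟩
    rw [haux.2.1 x hx, Measure.comp_add, Measure.comp_smul, collapse_comp_map_inl,
      Measure.dirac_bind (collapse ρ).measurable, collapse_inr,
      Measure.sub_add_cancel_of_le (hle x hx)]
  · rw [haux.1 x hx, collapse_comp_map_inl]

lemma collapse_comp_auxKernel [IsFiniteMeasure ρ] (haux : IsAuxKernel κ A ε ρ κbar)
    (hle : ∀ x ∈ A, ENNReal.ofReal ε • ρ ≤ κ x) :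
    collapse ρ ∘ₖ κbar = κ ∘ₖ collapse ρ := by
  ext1 y
  rw [Kernel.comp_apply, Kernel.comp_apply]
  rcases y with x | u
  · rw [collapse_comp_auxKernel_inl haux hle, collapse_inl, Measure.dirac_bind κ.measurable]
  · calc collapse ρ ∘ₘ κbar (Sum.inr u)
        = ρ.bind fun x => collapse ρ ∘ₘ κbar (Sum.inl x) := by
          rw [haux.2.2]
          exact Measure.bind_bind (κbar.measurable.comp measurable_inl).aemeasurable
            (collapse ρ).aemeasurable
      _ = κ ∘ₘ collapse ρ (Sum.inr u) := by
          simp_rw [collapse_comp_auxKernel_inl haux hle, collapse_inr]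

end Collapse

end ParRep

theorem auxiliary_chain_expectation_general
    {σ : Type*} [MeasurableSpace σ]
    (κ : ProbabilityTheory.Kernel σ σ) (hκ : ProbabilityTheory.IsMarkovKernel κ)
    (ε : ℝ) (A B : Set σ) (hB : MeasurableSet B)
    (ρ : Measure σ) (hHarris : ParRep.IsHarris κ ε A B ρ)
    (κbar : ProbabilityTheory.Kernel (σ ⊕ Unit) (σ ⊕ Unit))
    (haux : ParRep.IsAuxKernel κ A ε ρ κbar)
    (f : σ → ℝ) (hf : Measurable f) (hbdd : ∃ C, ∀ x, |f x| ≤ C)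
    (fbar : σ ⊕ Unit → ℝ)
    (hfbar : ∀ x : σ, fbar (Sum.inl x) = f x)
    (hfatom : fbar (Sum.inr ()) = ∫ x, f x ∂ρ) :
    ∀ (ξ : Measure σ), IsProbabilityMeasure ξ → ∀ n : ℕ,
      ∫ x, f x ∂(ParRep.iterMeasure κ ξ n)
        = ∫ y, fbar y ∂(ParRep.iterMeasure κbar (ξ.map Sum.inl) n) := by
  intro ξ hξ n
  obtain ⟨C, hC⟩ := hbdd
  have : IsProbabilityMeasure ρ := hHarris.2.1
  have hlaw : ParRep.iterMeasure κ ξ n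
      = ParRep.collapse ρ ∘ₘ ParRep.iterMeasure κbar (ξ.map Sum.inl) n := by
    rw [ParRep.comp_iterMeasure_of_comp_eq (ParRep.collapse_comp_auxKernel haux fun _ hx =>
      hHarris.smul_le hB hx), ParRep.collapse_comp_map_inl]
  have hint : Integrable f (ParRep.iterMeasure κ ξ n) :=
    .of_bound hf.aestronglyMeasurable C
      (ae_of_all _ fun x => (Real.norm_eq_abs _).trans_le (hC x))
  have hfbar_eq : fbar = Sum.elim f fun _ => ∫ x, f x ∂ρ := by
    funext y
    rcases y with x | ⟨⟩
    exacts [hfbar x, hfatom]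
  rw [hfbar_eq, hlaw, ParRep.integral_collapse_comp hf.stronglyMeasurable (hlaw ▸ hint)]

/-- For a Harris chain with kernel `κ` and auxiliary (split) chain
kernel `κbar`, and `f` bounded measurable with `f̄ = f` on `σ` and `f̄(atom) = ∫_B f dρ`,
one has `E_ξ[f (Z n)] = E_{ξ̄}[f̄ (Z̄ n)]` for every initial distribution `ξ` and `n`. -/
theorem auxiliary_chain_expectation
    {σ : Type*} [MeasurableSpace σ] [StandardBorelSpace σ]
    (κ : ProbabilityTheory.Kernel σ σ) (hκ : ProbabilityTheory.IsMarkovKernel κ)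
    (ε : ℝ) (A B : Set σ) (hA : MeasurableSet A) (hB : MeasurableSet B)
    (ρ : Measure σ) (hHarris : ParRep.IsHarris κ ε A B ρ)
    (κbar : ProbabilityTheory.Kernel (σ ⊕ Unit) (σ ⊕ Unit))
    (hκbar : ProbabilityTheory.IsMarkovKernel κbar)
    (haux : ParRep.IsAuxKernel κ A ε ρ κbar)
    (f : σ → ℝ) (hf : Measurable f) (hbdd : ∃ C, ∀ x, |f x| ≤ C)
    (fbar : σ ⊕ Unit → ℝ)
    (hfbar : ∀ x : σ, fbar (Sum.inl x) = f x)
    (hfatom : fbar (Sum.inr ()) = ∫ x, f x ∂ρ) :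
    ∀ (ξ : Measure σ), IsProbabilityMeasure ξ → ∀ n : ℕ,
      ∫ x, f x ∂(ParRep.iterMeasure κ ξ n)
        = ∫ y, fbar y ∂(ParRep.iterMeasure κbar (ξ.map Sum.inl) n) :=
  auxiliary_chain_expectation_general κ hκ ε A B hB ρ hHarris κbar haux f hf hbdd fbar hfbar hfatom
end
end
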